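/- arXiv:0709.2882 — 2 statements merged into one kernel-verified Lean document; each statement's English description precedes it below -/
import Mathlib

section
/- Let α ∈ [0,1) be irrational with continued fraction expansion [a_1, a_2, ...] and convergent denominators q_k. There is an absolute constant C > 0 such that for all M and k with q_k ≤ M < q_{k+1}, Σ_{m=1}^M 1/‖mα‖ ≤ C (M log q_k + a_{k+1} M). -/
/-!
By the best-approximation property of continued fractions, `‖mα‖ ≥ ‖q_{k-1}α‖ ≥ 1/(2q_k)` for
`0 < m < q_k`. So for `q_k` consecutive integers `0 < m < q_{k+1}` the signed distances
`mα - round (mα)` are `1/(2q_k)`-separated and at least `1/(2q_{k+1})` in absolute value; sorting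
them by sign and by `⌊2q_k |·|⌋` bounds the sum of their reciprocals by `4(q_{k+1} + q_k H_{q_k})`.
Cutting `1, …, M` into at most `2M/q_k` such blocks and using `q_{k+1} ≤ (a_{k+1} + 1) q_k` gives
the bound.
-/

open Filter MeasureTheory Real

/-- Distance from `x` to the nearest integer. -/
noncomputable def nd (x : ℝ) : ℝ := |x - round x|

/-- The Gauss map `x ↦ frac (1/x)` (with `0 ↦ 0`). -/
noncomputable def gaussMap (x : ℝ) : ℝ := Int.fract x⁻¹

/-- The `k`-th partial quotient of the continued fraction of `α` (for `k ≥ 1`). -/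
noncomputable def cfA (α : ℝ) (k : ℕ) : ℕ := ⌊(gaussMap^[k-1] α)⁻¹⌋₊

/-- Denominators of the continued fraction convergents of `α`. -/
noncomputable def cfQ (α : ℝ) : ℕ → ℕ
  | 0 => 1
  | 1 => cfA α 1
  | (k+2) => cfA α (k+2) * cfQ α (k+1) + cfQ α k

/-- Numerators of the continued fraction convergents of `α`. -/
noncomputable def cfP (α : ℝ) : ℕ → ℕ
  | 0 => 0
  | 1 => 1
  | (k+2) => cfA α (k+2) * cfP α (k+1) + cfP α k

/-- `S α M = ∑_{m=1}^M 1/‖mα‖`. -/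
noncomputable def S (α : ℝ) (M : ℕ) : ℝ := ∑ m ∈ Finset.Icc 1 M, 1 / nd (m * α)

open Finset

theorem sum_one_div_le_of_separated {ι : Type*} {s : Finset ι} {g : ι → ℝ} {ε δ : ℝ} {N : ℕ}
    (hε : 0 < ε) (hδ : 0 < δ) (hlow : ∀ i ∈ s, ε ≤ g i) (hup : ∀ i ∈ s, g i < (N + 1) * δ)
    (hsep : ∀ i ∈ s, ∀ j ∈ s, i ≠ j → δ ≤ |g i - g j|) :
    ∑ i ∈ s, 1 / g i ≤ 1 / ε + harmonic N / δ := by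
  have hg : ∀ i ∈ s, 0 < g i := fun i hi => hε.trans_le (hlow i hi)
  set φ : ι → ℕ := fun i => ⌊g i / δ⌋₊
  set h : ℕ → ℝ := fun j => if j = 0 then 1 / ε else 1 / (j * δ)
  have hφ_inj : Set.InjOn φ s := by
    intro i hi j hj hij
    by_contra hne
    have hfloor : ⌊g i / δ⌋ = ⌊g j / δ⌋ := by
      rw [← Int.natCast_floor_eq_floor (div_nonneg (hg i hi).le hδ.le),
        ← Int.natCast_floor_eq_floor (div_nonneg (hg j hj).le hδ.le)]
      exact congrArg _ hij
    have hclose := Int.abs_sub_lt_one_of_floor_eq_floor hfloor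
    rw [← sub_div, abs_div, abs_of_pos hδ, div_lt_one hδ] at hclose
    exact (hsep i hi j hj hne).not_gt hclose
  have hφ_le : ∀ i ∈ s, 1 / g i ≤ h (φ i) := by
    intro i hi
    by_cases h0 : φ i = 0
    · simpa [h, h0] using one_div_le_one_div_of_le hε (hlow i hi)
    · have hfl : (φ i : ℝ) * δ ≤ g i :=
        (le_div_iff₀ hδ).1 (Nat.floor_le (div_nonneg (hg i hi).le hδ.le))
      simp only [h, if_neg h0]
      exact one_div_le_one_div_of_le (by positivity) hfl
  have hφ_range : s.image φ ⊆ range (N + 1) := by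
    simp only [subset_iff, mem_image, mem_range, forall_exists_index, and_imp]
    rintro _ i hi rfl
    have : g i / δ < (N + 1 : ℕ) := by push_cast; exact (div_lt_iff₀ hδ).2 (hup i hi)
    exact (Nat.floor_lt (div_nonneg (hg i hi).le hδ.le)).2 this
  calc ∑ i ∈ s, 1 / g i ≤ ∑ i ∈ s, h (φ i) := sum_le_sum hφ_le
    _ = ∑ j ∈ s.image φ, h j := (sum_image hφ_inj).symm
    _ ≤ ∑ j ∈ range (N + 1), h j :=
      sum_le_sum_of_subset_of_nonneg hφ_range fun j _ _ => by positivity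
    _ = 1 / ε + harmonic N / δ := by
      rw [sum_range_succ', add_comm]
      simp [h, harmonic, div_eq_inv_mul, mul_sum]

theorem sum_one_div_abs_le_of_separated {ι : Type*} {s : Finset ι} {f : ι → ℝ} {ε δ : ℝ} {N : ℕ}
    (hε : 0 < ε) (hδ : 0 < δ) (hlow : ∀ i ∈ s, ε ≤ |f i|) (hup : ∀ i ∈ s, |f i| < (N + 1) * δ)
    (hsep : ∀ i ∈ s, ∀ j ∈ s, i ≠ j → δ ≤ |f i - f j|) :
    ∑ i ∈ s, 1 / |f i| ≤ 2 * (1 / ε + harmonic N / δ) := by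
  have piece : ∀ t ⊆ s, (∀ i ∈ t, ∀ j ∈ t, |f i - f j| = |(|f i| - |f j|)|) →
      ∑ i ∈ t, 1 / |f i| ≤ 1 / ε + harmonic N / δ := fun t hts hsign =>
    sum_one_div_le_of_separated hε hδ (fun i hi => hlow i (hts hi)) (fun i hi => hup i (hts hi))
      fun i hi j hj hij => hsign i hi j hj ▸ hsep i (hts hi) j (hts hj) hij
  rw [← sum_filter_add_sum_filter_not s (fun i => 0 < f i), two_mul]
  refine add_le_add (piece _ (filter_subset _ _) fun i hi j hj => ?_)
    (piece _ (filter_subset _ _) fun i hi j hj => ?_)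
  · rw [abs_of_pos (mem_filter.1 hi).2, abs_of_pos (mem_filter.1 hj).2]
  · rw [abs_of_nonpos (not_lt.1 (mem_filter.1 hi).2), abs_of_nonpos (not_lt.1 (mem_filter.1 hj).2),
      neg_sub_neg, abs_sub_comm]

theorem sum_Icc_le_of_block_bound {g : ℕ → ℝ} {q M : ℕ} {B : ℝ} (hq : 0 < q)
    (hB : ∀ s ⊆ Icc 1 M, (∀ a ∈ s, ∀ b ∈ s, a < b + q) → ∑ m ∈ s, g m ≤ B) :
    ∑ m ∈ Icc 1 M, g m ≤ ((M - 1) / q + 1 : ℕ) * B := by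
  have hmaps : ∀ m ∈ Icc 1 M, (m - 1) / q ∈ range ((M - 1) / q + 1) := fun m hm =>
    mem_range.2 (Nat.lt_succ_of_le (Nat.div_le_div_right (by have := (mem_Icc.1 hm).2; omega)))
  rw [← sum_fiberwise_of_maps_to hmaps]
  refine (sum_le_card_nsmul _ _ _ fun t _ => ?_).trans_eq (by rw [card_range, nsmul_eq_mul])
  refine hB _ (filter_subset (fun m => (m - 1) / q = t) _) fun a ha b hb => ?_
  have hab : (a - 1) / q = (b - 1) / q := (mem_filter.1 ha).2.trans (mem_filter.1 hb).2.symm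
  have ha1 := (mem_Icc.1 (mem_filter.1 ha).1).1
  have hb1 := (mem_Icc.1 (mem_filter.1 hb).1).1
  have h1 := Nat.lt_div_mul_add (a := a - 1) hq
  have h2 := Nat.div_mul_le_self (b - 1) q
  rw [hab] at h1
  omega

theorem Irrational.gaussMap {x : ℝ} (hx : Irrational x) : Irrational (gaussMap x) :=
  hx.inv.sub_intCast _

theorem gaussMap_mem_Ioo {x : ℝ} (hx : Irrational x) : gaussMap x ∈ Set.Ioo 0 1 :=
  ⟨(Int.fract_nonneg _).lt_of_ne' hx.gaussMap.ne_zero, Int.fract_lt_one _⟩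

theorem gaussMap_iterate_mem_Ioo {α : ℝ} (hα : Irrational α) (hα01 : α ∈ Set.Ioo 0 1) :
    ∀ n, gaussMap^[n] α ∈ Set.Ioo 0 1
  | 0 => hα01
  | n + 1 => by
    rw [Function.iterate_succ_apply']
    exact gaussMap_mem_Ioo (Function.Iterate.rec Irrational hα (fun _ => Irrational.gaussMap) n)

theorem Int.ne_zero_and_mul_nonpos_of_eq_of_lt {Q₀ Q₁ x y m : ℤ} (hQ₀ : 0 ≤ Q₀) (hm : 0 < m)
    (hmQ : m < Q₁) (h : m = x * Q₁ + y * Q₀) : y ≠ 0 ∧ x * y ≤ 0 := by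
  constructor
  · rintro rfl
    rcases le_or_gt x 0 with hx | hx <;> nlinarith
  · by_contra! hxy
    rcases lt_or_gt_of_ne (left_ne_zero_of_mul hxy.ne') with hx | hx
    · nlinarith [neg_of_mul_pos_right hxy hx.le]
    · nlinarith [pos_of_mul_pos_right hxy hx.le]

theorem le_abs_intCast_mul_sub {x y : ℤ} {a b : ℝ} (ha : 0 ≤ a) (hb : 0 ≤ b) (hy : y ≠ 0)
    (hxy : x * y ≤ 0) : b ≤ |x * a - y * b| := by
  rcases lt_or_gt_of_ne hy with hy | hy
  · have hx : (0 : ℝ) ≤ x := by exact_mod_cast nonneg_of_mul_nonpos_left hxy hy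
    have hy : (y : ℝ) ≤ -1 := by exact_mod_cast Int.le_sub_one_of_lt hy
    exact le_abs.2 (Or.inl (by nlinarith))
  · have hx : (x : ℝ) ≤ 0 := by exact_mod_cast nonpos_of_mul_nonpos_left hxy hy
    have hy : (1 : ℝ) ≤ y := by exact_mod_cast hy
    exact le_abs.2 (Or.inr (by nlinarith))

namespace ContinuedFraction

variable {α : ℝ}

theorem cfA_add_gaussMap_iterate_succ {n : ℕ} (h : 0 ≤ gaussMap^[n] α) :
    (cfA α (n + 1) : ℝ) + gaussMap^[n + 1] α = (gaussMap^[n] α)⁻¹ := by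
  rw [Function.iterate_succ_apply', gaussMap, cfA, Nat.add_sub_cancel,
    natCast_floor_eq_intCast_floor (inv_nonneg.2 h), Int.floor_add_fract]

theorem one_le_cfA (hβ : ∀ n, gaussMap^[n] α ∈ Set.Ioo 0 1) (n : ℕ) : 1 ≤ cfA α (n + 1) :=
  Nat.le_floor <| by
    rw [Nat.cast_one]
    exact (one_lt_inv₀ (hβ n).1).2 (hβ n).2 |>.le

/-- `theta α n = ‖q_{n-1} α‖`, see `den_mul_sub_num`. -/
noncomputable def theta (α : ℝ) (n : ℕ) : ℝ := ∏ j ∈ range n, gaussMap^[j] α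

theorem theta_succ (n : ℕ) : theta α (n + 1) = theta α n * gaussMap^[n] α := prod_range_succ _ _

theorem theta_pos (hβ : ∀ n, gaussMap^[n] α ∈ Set.Ioo 0 1) (n : ℕ) : 0 < theta α n :=
  prod_pos fun j _ => (hβ j).1

theorem theta_succ_lt (hβ : ∀ n, gaussMap^[n] α ∈ Set.Ioo 0 1) (n : ℕ) :
    theta α (n + 1) < theta α n := by
  rw [theta_succ]
  exact mul_lt_of_lt_one_right (theta_pos hβ n) (hβ n).2

theorem theta_eq (hβ : ∀ n, gaussMap^[n] α ∈ Set.Ioo 0 1) (n : ℕ) :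
    theta α n = cfA α (n + 1) * theta α (n + 1) + theta α (n + 2) := by
  have h := cfA_add_gaussMap_iterate_succ (hβ n).1.le
  have hinv := mul_inv_cancel₀ (hβ n).1.ne'
  rw [theta_succ (n + 1), theta_succ n]
  linear_combination (-(theta α n * gaussMap^[n] α)) * h - theta α n * hinv

/-- Convergent denominators shifted by one, `den α (n + 1) = cfQ α n`, with `den α 0 = 0`
playing the role of `q_{-1}`. -/
noncomputable def den (α : ℝ) : ℕ → ℕ
  | 0 => 0
  | 1 => 1
  | (n + 2) => cfA α (n + 1) * den α (n + 1) + den α n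

/-- Convergent numerators, shifted like `den`. -/
noncomputable def num (α : ℝ) : ℕ → ℕ
  | 0 => 1
  | 1 => 0
  | (n + 2) => cfA α (n + 1) * num α (n + 1) + num α n

theorem den_succ_eq_cfQ : ∀ n, den α (n + 1) = cfQ α n
  | 0 => rfl
  | 1 => by simp [den, cfQ]
  | n + 2 => by
    rw [den, den_succ_eq_cfQ n, den_succ_eq_cfQ (n + 1), cfQ]

theorem num_mul_den_sub (n : ℕ) :
    (num α n : ℤ) * den α (n + 1) - num α (n + 1) * den α n = (-1) ^ n := by
  induction n with
  | zero => simp [num, den]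
  | succ n ih =>
    simp only [num, den, Nat.cast_add, Nat.cast_mul]
    linear_combination (-1 : ℤ) * ih

theorem one_le_den_succ (hβ : ∀ n, gaussMap^[n] α ∈ Set.Ioo 0 1) : ∀ n, 1 ≤ den α (n + 1)
  | 0 => le_rfl
  | n + 1 => (one_le_den_succ hβ n).trans <| le_add_right <|
      Nat.le_mul_of_pos_left _ (one_le_cfA hβ n)

theorem den_le_den_succ (hβ : ∀ n, gaussMap^[n] α ∈ Set.Ioo 0 1) : ∀ n, den α n ≤ den α (n + 1)
  | 0 => Nat.zero_le _
  | n + 1 => le_add_right <| Nat.le_mul_of_pos_left _ (one_le_cfA hβ n)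

theorem den_mul_sub_num (hβ : ∀ n, gaussMap^[n] α ∈ Set.Ioo 0 1) (n : ℕ) :
    (den α n : ℝ) * α - num α n = (-1) ^ (n + 1) * theta α n := by
  induction n using Nat.twoStepInduction with
  | zero => simp [den, num, theta]
  | one => simp [den, num, theta]
  | more n ih₀ ih₁ =>
    simp only [den, num, Nat.cast_add, Nat.cast_mul]
    linear_combination (cfA α (n + 1) : ℝ) * ih₁ + ih₀ + (-1) ^ (n + 1) * theta_eq hβ n

theorem den_succ_mul_theta_add (hβ : ∀ n, gaussMap^[n] α ∈ Set.Ioo 0 1) (n : ℕ) :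
    (den α (n + 1) : ℝ) * theta α n + den α n * theta α (n + 1) = 1 := by
  induction n with
  | zero => simp [den, theta]
  | succ n ih =>
    simp only [den, Nat.cast_add, Nat.cast_mul]
    linear_combination ih - (den α (n + 1) : ℝ) * theta_eq hβ n

theorem one_le_two_mul_den_mul_theta (hβ : ∀ n, gaussMap^[n] α ∈ Set.Ioo 0 1) (n : ℕ) :
    1 ≤ 2 * den α (n + 1) * theta α n := by
  have hden : (den α n : ℝ) ≤ den α (n + 1) := by exact_mod_cast den_le_den_succ hβ n
  have htheta := theta_succ_lt hβ n
  nlinarith [den_succ_mul_theta_add hβ n, theta_pos hβ (n + 1), (den α n).cast_nonneg (α := ℝ)]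

theorem theta_le_abs_mul_sub (hβ : ∀ n, gaussMap^[n] α ∈ Set.Ioo 0 1) {n m : ℕ} (z : ℤ)
    (hm : 0 < m) (hmn : m < den α (n + 1)) : theta α n ≤ |m * α - z| := by
  have hdet := num_mul_den_sub (α := α) n
  have hsq : ((-1 : ℤ) ^ n) ^ 2 = 1 := by rw [← pow_mul, mul_comm, pow_mul]; norm_num
  set x : ℤ := (-1) ^ n * (m * num α n - z * den α n)
  set y : ℤ := (-1) ^ n * (z * den α (n + 1) - m * num α (n + 1))
  have hmxy : (m : ℤ) = x * den α (n + 1) + y * den α n := by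
    linear_combination (-(m : ℤ)) * hsq - ((-1) ^ n * m) * hdet
  have hzxy : z = x * num α (n + 1) + y * num α n := by
    linear_combination (-z) * hsq - ((-1) ^ n * z) * hdet
  obtain ⟨hy, hxy⟩ := Int.ne_zero_and_mul_nonpos_of_eq_of_lt (Int.natCast_nonneg _)
    (by exact_mod_cast hm) (by exact_mod_cast hmn) hmxy
  have hmR : (m : ℝ) = x * den α (n + 1) + y * den α n := by exact_mod_cast hmxy
  have hzR : (z : ℝ) = x * num α (n + 1) + y * num α n := by exact_mod_cast hzxy
  have hsplit : (m : ℝ) * α - z = (-1) ^ n * (x * theta α (n + 1) - y * theta α n) := by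
    linear_combination α * hmR - hzR + x * den_mul_sub_num hβ (n + 1) + y * den_mul_sub_num hβ n
  rw [hsplit, abs_mul, abs_pow, abs_neg, abs_one, one_pow, one_mul]
  exact le_abs_intCast_mul_sub (theta_pos hβ _).le (theta_pos hβ _).le hy hxy

theorem sum_block_le (hβ : ∀ n, gaussMap^[n] α ∈ Set.Ioo 0 1) {k : ℕ} {s : Finset ℕ}
    (hs : ∀ m ∈ s, 0 < m ∧ m < den α (k + 2)) (hdiam : ∀ a ∈ s, ∀ b ∈ s, a < b + den α (k + 1)) :
    ∑ m ∈ s, 1 / nd (m * α) ≤ 4 * (den α (k + 2) + den α (k + 1) * harmonic (den α (k + 1))) := by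
  set q := den α (k + 1)
  set f : ℕ → ℝ := fun m => m * α - round (m * α)
  have hθ₀ := theta_pos hβ k
  have hθ₁ := theta_pos hβ (k + 1)
  have hqθ := one_le_two_mul_den_mul_theta hβ k
  have hsep : ∀ i ∈ s, ∀ j ∈ s, j < i → theta α k ≤ |f i - f j| := by
    intro i hi j hj hji
    have hdiff : f i - f j = ((i - j : ℕ) : ℝ) * α - ((round (i * α) - round (j * α) : ℤ) : ℝ) := by
      simp only [f]
      push_cast [Nat.cast_sub hji.le]
      ring
    rw [hdiff]
    exact theta_le_abs_mul_sub hβ _ (Nat.sub_pos_of_lt hji) (by have := hdiam i hi j hj; omega)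
  have hsum := sum_one_div_abs_le_of_separated (f := f) (N := q) hθ₁ hθ₀
    (fun m hm => theta_le_abs_mul_sub hβ _ (hs m hm).1 (hs m hm).2)
    (fun m _ => (abs_sub_round _).trans_lt (by nlinarith))
    fun i hi j hj hij => (lt_or_gt_of_ne hij).elim
      (fun h => abs_sub_comm (f j) (f i) ▸ hsep j hj i hi h) (hsep i hi j hj)
  have hH : (0 : ℝ) ≤ harmonic q := by exact_mod_cast
    (harmonic_pos (Nat.one_le_iff_ne_zero.1 (one_le_den_succ hβ k))).le
  have h₁ : 1 / theta α (k + 1) ≤ 2 * den α (k + 2) := by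
    rw [div_le_iff₀ hθ₁]
    linarith [one_le_two_mul_den_mul_theta hβ (k + 1)]
  have h₀ : harmonic q / theta α k ≤ 2 * q * harmonic q := by
    rw [div_le_iff₀ hθ₀]
    nlinarith
  calc ∑ m ∈ s, 1 / nd (m * α) = ∑ m ∈ s, 1 / |f m| := rfl
    _ ≤ 2 * (1 / theta α (k + 1) + harmonic q / theta α k) := hsum
    _ ≤ 4 * (den α (k + 2) + q * harmonic q) := by linarith

theorem den_succ_succ_le (hβ : ∀ n, gaussMap^[n] α ∈ Set.Ioo 0 1) (n : ℕ) :
    den α (n + 2) ≤ (cfA α (n + 1) + 1) * den α (n + 1) := by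
  rw [den, add_one_mul]
  exact Nat.add_le_add_left (den_le_den_succ hβ n) _

end ContinuedFraction

open ContinuedFraction

theorem sum_upper_bound :
    ∃ C : ℝ, 0 < C ∧ ∀ α : ℝ, Irrational α → α ∈ Set.Ico (0:ℝ) 1 →
      ∀ M k : ℕ, cfQ α k ≤ M → M < cfQ α (k+1) →
        S α M ≤ C * ((M : ℝ) * Real.log (cfQ α k) + (cfA α (k+1) : ℝ) * M) := by
  refine ⟨24, by norm_num, fun α hα hα01 M k hqM hMQ => ?_⟩
  have hβ := gaussMap_iterate_mem_Ioo hα ⟨hα01.1.lt_of_ne' hα.ne_zero, hα01.2⟩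
  rw [← den_succ_eq_cfQ] at hqM hMQ ⊢
  set q := den α (k + 1)
  set T := (M - 1) / q + 1
  have hq := one_le_den_succ hβ k
  have hS : S α M ≤ T * (4 * (den α (k + 2) + q * harmonic q)) :=
    sum_Icc_le_of_block_bound hq fun s hs hdiam => sum_block_le hβ
      (fun m hm => ⟨(mem_Icc.1 (hs hm)).1, (mem_Icc.1 (hs hm)).2.trans_lt hMQ⟩) hdiam
  have hT : (T : ℝ) * q ≤ 2 * M := by
    have := Nat.div_mul_le_self (M - 1) q
    exact_mod_cast (show T * q ≤ 2 * M by rw [add_one_mul]; omega)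
  have hQ : (den α (k + 2) : ℝ) ≤ (cfA α (k + 1) + 1) * q := by
    exact_mod_cast den_succ_succ_le hβ k
  have hH := harmonic_le_one_add_log q
  have ha : (1 : ℝ) ≤ cfA α (k + 1) := by exact_mod_cast one_le_cfA hβ k
  have hlog : 0 ≤ Real.log q := Real.log_nonneg (by exact_mod_cast hq)
  calc S α M ≤ T * (4 * (den α (k + 2) + q * harmonic q)) := hS
    _ ≤ T * (4 * ((cfA α (k + 1) + 1) * q + q * (1 + Real.log q))) := by gcongr
    _ = 4 * (T * q) * (cfA α (k + 1) + 2 + Real.log q) := by ring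
    _ ≤ 4 * (2 * M) * (cfA α (k + 1) + 2 + Real.log q) := by gcongr
    _ ≤ 24 * (M * Real.log q + cfA α (k + 1) * M) := by nlinarith [(M.cast_nonneg : (0 : ℝ) ≤ M)]
end

section
/- If α is of bounded type (its continued fraction partial quotients are bounded), then there exist constants c, C > 0 (depending on α) such that c·M·log M ≤ Σ_{m=1}^M 1/‖mα‖ ≤ C·M·log M for all M ≥ 2. -/
open Filter MeasureTheory Real

/-!
Bounded partial quotients give `q (k + 1) ≤ (B + 1) q k`. As `q k α - p k` is the best
approximation of `α` with denominator below `q (k + 1)`, and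
`|q k α - p k| ≥ 1 / (q k + q (k + 1))`, this makes `α` badly approximable: `‖m α‖ ≥ c / m`.
Then the points `m α - round (m α)`, `m ≤ M`, are `c / M`-separated, so each band
`j c / M ≤ ‖m α‖ < (j + 1) c / M` holds at most two of them, and
`S α M ≤ (2 M / c) H (M / 2c) = O(M log M)`.

Conversely, for any irrational `α`, by pigeonhole on `M / k` boxes at least `k` of the `m ≤ M`
satisfy `‖m α‖ ≤ 2 k / M`, for every `k ≤ M / 2`. So the `k`-th smallest `‖m α‖` is at most
`2 k / M`, and `S α M ≥ (M / 2) H (M / 2) ≥ (M log M) / 4`.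
-/

open Finset

lemma abs_sub_lt_of_natFloor_div_eq {u v δ : ℝ} (hδ : 0 < δ) (hu : 0 ≤ u) (hv : 0 ≤ v)
    (h : ⌊u / δ⌋₊ = ⌊v / δ⌋₊) : |u - v| < δ := by
  have hfloor : ⌊u / δ⌋ = ⌊v / δ⌋ := by
    rw [← Int.natCast_floor_eq_floor (by positivity), ← Int.natCast_floor_eq_floor (by positivity),
      h]
  have := Int.abs_sub_lt_one_of_floor_eq_floor hfloor
  rwa [← sub_div, abs_div, abs_of_pos hδ, div_lt_one hδ] at this

-- Removing the `i` with the largest `x i ≤ (K + 1) t` keeps the hypothesis for all `k ≤ K`.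
lemma harmonic_div_le_sum_inv {ι : Type*} [DecidableEq ι] (x : ι → ℝ) {t : ℝ} (ht : 0 < t) :
    ∀ (K : ℕ) (s : Finset ι), (∀ i ∈ s, 0 < x i) → (∀ k ≤ K, k ≤ #{i ∈ s | x i ≤ k * t}) →
      (harmonic K : ℝ) / t ≤ ∑ i ∈ s, 1 / x i
  | 0, s, hx, _ => by
    simpa using sum_nonneg fun i hi => (one_div_pos.2 (hx i hi)).le
  | K + 1, s, hx, hcard => by
    have hA : ({i ∈ s | x i ≤ (K + 1 : ℕ) * t}).Nonempty :=
      card_pos.1 ((Nat.succ_pos K).trans_le (hcard _ le_rfl))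
    obtain ⟨i₀, hi₀A, hi₀max⟩ := exists_max_image _ x hA
    obtain ⟨hi₀, hxi₀⟩ := mem_filter.1 hi₀A
    have hcard' : ∀ k ≤ K, k ≤ #{i ∈ s.erase i₀ | x i ≤ k * t} := by
      intro k hk
      rw [filter_erase]
      by_cases hk₀ : x i₀ ≤ k * t
      · have hsub : {i ∈ s | x i ≤ (K + 1 : ℕ) * t} ⊆ {i ∈ s | x i ≤ k * t} := fun i hi =>
          mem_filter.2 ⟨(mem_filter.1 hi).1, (hi₀max i hi).trans hk₀⟩
        have := card_le_card hsub
        have := hcard (K + 1) le_rfl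
        have := pred_card_le_card_erase (s := {i ∈ s | x i ≤ k * t}) (a := i₀)
        omega
      · rw [erase_eq_of_notMem (s := {i ∈ s | x i ≤ k * t}) (a := i₀)
          (fun h => hk₀ (mem_filter.1 h).2)]
        exact hcard k (by omega)
    have ih := harmonic_div_le_sum_inv x ht K (s.erase i₀)
      (fun i hi => hx i (mem_of_mem_erase hi)) hcard'
    have hi₀term : ((K + 1 : ℕ) : ℝ)⁻¹ / t ≤ 1 / x i₀ := by
      rw [div_eq_mul_inv, ← mul_inv, ← one_div]
      exact one_div_le_one_div_of_le (hx i₀ hi₀) (by linarith)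
    rw [← add_sum_erase s _ hi₀, harmonic_succ, Rat.cast_add, add_div, add_comm, Rat.cast_inv,
      Rat.cast_natCast]
    exact add_le_add hi₀term ih

-- A band `n δ ≤ |y| < (n + 1) δ` contains at most one of the points on each side of `0`.
lemma card_filter_natFloor_abs_div_eq_le_two {ι : Type*} (s : Finset ι) (y : ι → ℝ) {δ : ℝ}
    (hδ : 0 < δ) (hsep : ∀ i ∈ s, ∀ j ∈ s, i ≠ j → δ ≤ |y i - y j|) (n : ℕ) :
    #{i ∈ s | ⌊|y i| / δ⌋₊ = n} ≤ 2 := by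
  classical
  refine (card_le_card_of_injOn (fun i => decide (0 ≤ y i)) (t := univ)
    (fun _ _ => mem_univ _) ?_).trans_eq rfl
  intro i hi j hj hsign
  by_contra hij
  obtain ⟨his, hin⟩ := mem_filter.1 hi
  obtain ⟨hjs, hjn⟩ := mem_filter.1 hj
  have hband := abs_sub_lt_of_natFloor_div_eq hδ (abs_nonneg _) (abs_nonneg _) (hin.trans hjn.symm)
  have hsame : |y i - y j| = |(|y i| - |y j|)| := by
    simp only [decide_eq_decide] at hsign
    rcases le_or_gt 0 (y i) with h | h
    · rw [abs_of_nonneg h, abs_of_nonneg (hsign.1 h)]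
    · rw [abs_of_neg h, abs_of_neg (not_le.1 (mt hsign.2 (not_le.2 h))), ← abs_neg]
      ring_nf
  linarith [hsep i his j hjs hij]

lemma sum_inv_le_mul_harmonic {ι : Type*} (s : Finset ι) (f : ι → ℕ) {J r : ℕ}
    (hf : ∀ i ∈ s, f i ∈ Icc 1 J) (hr : ∀ j, #{i ∈ s | f i = j} ≤ r) :
    ∑ i ∈ s, 1 / (f i : ℝ) ≤ r * harmonic J := by
  classical
  rw [← sum_fiberwise_of_maps_to hf, harmonic_eq_sum_Icc]
  push_cast
  rw [mul_sum]
  gcongr with j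
  rw [sum_congr rfl fun i hi => by rw [(mem_filter.1 hi).2], sum_const, nsmul_eq_mul, one_div]
  gcongr
  exact_mod_cast hr j

lemma sum_inv_abs_le_of_separated {ι : Type*} (s : Finset ι) (y : ι → ℝ) {δ R : ℝ} (hδ : 0 < δ)
    (hsep : ∀ i ∈ s, ∀ j ∈ s, i ≠ j → δ ≤ |y i - y j|) (hy : ∀ i ∈ s, δ ≤ |y i| ∧ |y i| ≤ R) :
    ∑ i ∈ s, 1 / |y i| ≤ 2 / δ * harmonic ⌊R / δ⌋₊ := by
  have hf : ∀ i ∈ s, ⌊|y i| / δ⌋₊ ∈ Icc 1 ⌊R / δ⌋₊ := fun i hi => mem_Icc.2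
    ⟨Nat.le_floor (by rw [Nat.cast_one, le_div_iff₀ hδ, one_mul]; exact (hy i hi).1),
      Nat.floor_le_floor (div_le_div_of_nonneg_right (hy i hi).2 hδ.le)⟩
  have hterm : ∀ i ∈ s, 1 / |y i| ≤ 1 / δ * (1 / ⌊|y i| / δ⌋₊) := by
    intro i hi
    have h1 : (1 : ℝ) ≤ ⌊|y i| / δ⌋₊ := by exact_mod_cast (mem_Icc.1 (hf i hi)).1
    have h2 : (⌊|y i| / δ⌋₊ : ℝ) * δ ≤ |y i| :=
      (le_div_iff₀ hδ).1 (Nat.floor_le (div_nonneg (abs_nonneg _) hδ.le))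
    rw [one_div_mul_one_div, mul_comm δ]
    exact one_div_le_one_div_of_le (by positivity) h2
  calc ∑ i ∈ s, 1 / |y i| ≤ ∑ i ∈ s, 1 / δ * (1 / ⌊|y i| / δ⌋₊) := sum_le_sum hterm
    _ = 1 / δ * ∑ i ∈ s, 1 / (⌊|y i| / δ⌋₊ : ℝ) := (mul_sum _ _ _).symm
    _ ≤ 1 / δ * (2 * harmonic ⌊R / δ⌋₊) := by
      gcongr
      exact_mod_cast sum_inv_le_mul_harmonic s _ hf
        (card_filter_natFloor_abs_div_eq_le_two s y hδ hsep)
    _ = 2 / δ * harmonic ⌊R / δ⌋₊ := by ring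

lemma abs_le_abs_mul_sub_of_determinant (α : ℝ) {p q p' q' m n : ℤ}
    (hdet : |p' * q - p * q'| = 1) (hsign : (q * α - p) * (q' * α - p') ≤ 0)
    (hq : 0 ≤ q) (hm : 0 < m) (hmq : m < q') :
    |q * α - p| ≤ |m * α - n| := by
  set e := p' * q - p * q'
  have he : e * e = 1 := by rw [← abs_mul_abs_self, hdet, one_mul]
  -- the coordinates of `(m, n)` in the unimodular basis `(q, p), (q', p')`
  set x := e * (p' * m - q' * n)
  set y := e * (q * n - p * m)
  have hmxy : m = x * q + y * q' := by linear_combination (-m) * he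
  have hnxy : n = x * p + y * p' := by linear_combination (-n) * he
  have hx : x ≠ 0 := by
    rintro hx0
    rw [hx0, zero_mul, zero_add] at hmxy
    rcases le_or_gt y 0 with hy | hy <;> nlinarith
  have hxy : x * y ≤ 0 := by
    by_contra! hxy
    rcases pos_and_pos_or_neg_and_neg_of_mul_pos hxy with ⟨hx, hy⟩ | ⟨hx, hy⟩ <;> nlinarith
  have hsplit : (m : ℝ) * α - n = x * (q * α - p) + y * (q' * α - p') := by
    rw [hmxy, hnxy]; push_cast; ring
  have hsame : 0 ≤ (x * (q * α - p)) * (y * (q' * α - p')) := by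
    have : ((x * y : ℤ) : ℝ) ≤ 0 := by exact_mod_cast hxy
    push_cast at this
    nlinarith
  have hone : (1 : ℝ) ≤ |(x : ℝ)| := by exact_mod_cast Int.one_le_abs hx
  calc |q * α - p| ≤ |(x : ℝ)| * |q * α - p| := le_mul_of_one_le_left (abs_nonneg _) hone
    _ = |x * (q * α - p)| := (abs_mul _ _).symm
    _ ≤ |m * α - n| := by
      rw [hsplit]
      exact sq_le_sq.1 (by nlinarith)

section ContinuedFraction

variable {α : ℝ}

lemma irrational_gaussMap_iterate (hα : Irrational α) (k : ℕ) : Irrational (gaussMap^[k] α) := by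
  induction k with
  | zero => exact hα
  | succ k ih =>
    rw [Function.iterate_succ_apply', gaussMap, Int.fract]
    exact ih.inv.sub_intCast _

section Denominators

variable (ha : ∀ k, 1 ≤ cfA α (k + 1))
include ha

lemma one_le_cfQ : ∀ k, 1 ≤ cfQ α k
  | 0 => le_rfl
  | 1 => ha 0
  | k + 2 => by
    have := one_le_cfQ k
    have := ha (k + 1)
    rw [cfQ]
    nlinarith

lemma cfQ_le_cfQ_succ : ∀ k, cfQ α k ≤ cfQ α (k + 1)
  | 0 => ha 0
  | k + 1 => by
    have := ha (k + 1)
    rw [cfQ]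
    nlinarith

lemma le_cfQ_succ : ∀ k, k ≤ cfQ α (k + 1)
  | 0 => Nat.zero_le _
  | k + 1 => by
    have := le_cfQ_succ k
    have := one_le_cfQ ha k
    have := ha (k + 1)
    rw [cfQ]
    nlinarith

lemma exists_cfQ_le_lt {m : ℕ} (hm : 1 ≤ m) : ∃ k, cfQ α k ≤ m ∧ m < cfQ α (k + 1) := by
  classical
  have hex : ∃ k, m < cfQ α (k + 1) := ⟨m + 1, (le_cfQ_succ ha (m + 1))⟩
  refine ⟨Nat.find hex, ?_, Nat.find_spec hex⟩
  rcases Nat.eq_zero_or_eq_succ_pred (Nat.find hex) with h | h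
  · rw [h]; exact hm
  · rw [h]; exact not_lt.1 (Nat.find_min hex (h ▸ Nat.pred_lt_self (by omega)))

lemma cfQ_succ_le {B : ℕ} (hB : ∀ k, 1 ≤ k → cfA α k ≤ B) :
    ∀ k, cfQ α (k + 1) ≤ (B + 1) * cfQ α k
  | 0 => by simpa [cfQ] using (hB 1 le_rfl).trans (Nat.le_succ B)
  | k + 1 => by
    have := hB (k + 2) (by omega)
    have := cfQ_le_cfQ_succ ha k
    rw [cfQ]
    nlinarith

end Denominators

lemma cfQ_cfP_determinant (α : ℝ) :
    ∀ k, (cfP α (k + 1) * cfQ α k - cfP α k * cfQ α (k + 1) : ℤ) = (-1) ^ k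
  | 0 => by simp [cfP, cfQ]
  | k + 1 => by
    have ih := cfQ_cfP_determinant α k
    simp only [cfP, cfQ]
    push_cast
    linear_combination (-1 : ℤ) * ih

noncomputable def cfErr (α : ℝ) (k : ℕ) : ℝ := cfQ α k * α - cfP α k

section Irrational

variable (hα : Irrational α) (hmem : α ∈ Set.Ico 0 1)
include hα hmem

lemma gaussMap_iterate_mem_Ioo_s6 (k : ℕ) :
    gaussMap^[k] α ∈ Set.Ioo 0 1 := by
  have hne : gaussMap^[k] α ≠ 0 := (irrational_gaussMap_iterate hα k).ne_zero
  cases k with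
  | zero => exact ⟨hmem.1.lt_of_ne' hne, hmem.2⟩
  | succ k =>
    rw [Function.iterate_succ_apply'] at hne ⊢
    exact ⟨(Int.fract_nonneg _).lt_of_ne' hne, Int.fract_lt_one _⟩

lemma cfA_add_gaussMap_iterate_mul (k : ℕ) :
    (cfA α (k + 1) + gaussMap^[k + 1] α) * gaussMap^[k] α = 1 := by
  have hpos := (gaussMap_iterate_mem_Ioo_s6 hα hmem k).1
  rw [cfA, Nat.add_sub_cancel, natCast_floor_eq_intCast_floor (inv_pos.2 hpos).le,
    Function.iterate_succ_apply', gaussMap, Int.floor_add_fract, inv_mul_cancel₀ hpos.ne']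

lemma one_le_cfA (k : ℕ) : 1 ≤ cfA α (k + 1) := by
  have hr := gaussMap_iterate_mem_Ioo_s6 hα hmem k
  rw [cfA, Nat.add_sub_cancel]
  exact Nat.le_floor (by simpa using ((one_lt_inv₀ hr.1).2 hr.2).le)

lemma cfErr_succ :
    ∀ k, cfErr α (k + 1) = -gaussMap^[k + 1] α * cfErr α k
  | 0 => by
    have h := cfA_add_gaussMap_iterate_mul hα hmem 0
    simp only [cfErr, cfQ, cfP, Function.iterate_zero_apply] at h ⊢
    push_cast
    linear_combination h
  | k + 1 => by
    have ih := cfErr_succ k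
    have h := cfA_add_gaussMap_iterate_mul hα hmem (k + 1)
    have hrec : cfErr α (k + 2) = cfA α (k + 2) * cfErr α (k + 1) + cfErr α k := by
      simp only [cfErr, cfQ, cfP]; push_cast; ring
    linear_combination hrec + (cfA α (k + 2) + gaussMap^[k + 2] α) * ih - cfErr α k * h

lemma cfErr_mul_cfErr_succ_nonpos (k : ℕ) : cfErr α k * cfErr α (k + 1) ≤ 0 := by
  rw [cfErr_succ hα hmem]
  have := (gaussMap_iterate_mem_Ioo_s6 hα hmem (k + 1)).1
  nlinarith [sq_nonneg (cfErr α k)]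

lemma abs_cfErr_succ_le (k : ℕ) : |cfErr α (k + 1)| ≤ |cfErr α k| := by
  have hr := gaussMap_iterate_mem_Ioo_s6 hα hmem (k + 1)
  rw [cfErr_succ hα hmem, abs_mul, abs_neg, abs_of_pos hr.1]
  exact mul_le_of_le_one_left (abs_nonneg _) hr.2.le

lemma one_le_abs_cfErr_mul (k : ℕ) : 1 ≤ |cfErr α k| * (cfQ α k + cfQ α (k + 1)) := by
  have hdet : ((cfP α (k + 1) * cfQ α k - cfP α k * cfQ α (k + 1) : ℤ) : ℝ) = (-1) ^ k := by
    exact_mod_cast cfQ_cfP_determinant α k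
  have hdet' : cfErr α k * cfQ α (k + 1) - cfErr α (k + 1) * cfQ α k = (-1) ^ k := by
    rw [← hdet, cfErr, cfErr]; push_cast; ring
  have hle := abs_cfErr_succ_le hα hmem k
  calc (1 : ℝ) = |cfErr α k * cfQ α (k + 1) - cfErr α (k + 1) * cfQ α k| := by simp [hdet']
    _ ≤ |cfErr α k| * cfQ α (k + 1) + |cfErr α (k + 1)| * cfQ α k := by
      simpa [abs_mul] using abs_sub (cfErr α k * cfQ α (k + 1)) (cfErr α (k + 1) * cfQ α k)
    _ ≤ |cfErr α k| * (cfQ α k + cfQ α (k + 1)) := by nlinarith [Nat.cast_nonneg (α := ℝ) (cfQ α k)]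

lemma abs_cfErr_le_abs_mul_sub (k : ℕ) (m n : ℤ) (hm : 0 < m) (hmq : m < cfQ α (k + 1)) :
    |cfErr α k| ≤ |m * α - n| := by
  have hdet : |(cfP α (k + 1) * cfQ α k - cfP α k * cfQ α (k + 1) : ℤ)| = 1 := by
    rw [cfQ_cfP_determinant, abs_pow, abs_neg, abs_one, one_pow]
  have hsign := cfErr_mul_cfErr_succ_nonpos hα hmem k
  simp only [cfErr] at hsign ⊢
  exact_mod_cast abs_le_abs_mul_sub_of_determinant α hdet (by exact_mod_cast hsign)
    (Nat.cast_nonneg _) hm hmq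

lemma exists_div_le_nd_of_cfA_le {B : ℕ} (hB : ∀ k, 1 ≤ k → cfA α k ≤ B) :
    ∃ c > 0, ∀ m : ℕ, 1 ≤ m → c / m ≤ nd (m * α) := by
  have ha := one_le_cfA hα hmem
  refine ⟨1 / (B + 2), by positivity, fun m hm => ?_⟩
  obtain ⟨k, hqm, hmq⟩ := exists_cfQ_le_lt ha hm
  have hsum : cfQ α k + cfQ α (k + 1) ≤ (B + 2) * m := by
    nlinarith [cfQ_succ_le ha hB k]
  have hsumR : ((cfQ α k + cfQ α (k + 1) : ℕ) : ℝ) ≤ (B + 2) * m := by exact_mod_cast hsum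
  have hpos : (0 : ℝ) < cfQ α k + cfQ α (k + 1) := by
    have := one_le_cfQ ha k; positivity
  calc 1 / (B + 2) / (m : ℝ) = 1 / ((B + 2) * m) := by rw [div_div]
    _ ≤ 1 / (cfQ α k + cfQ α (k + 1)) := by
      push_cast at hsumR; exact one_div_le_one_div_of_le hpos hsumR
    _ ≤ |cfErr α k| := by rw [div_le_iff₀ hpos]; exact one_le_abs_cfErr_mul hα hmem k
    _ ≤ nd (m * α) := by
      simpa [nd] using abs_cfErr_le_abs_mul_sub hα hmem k m (round ((m : ℝ) * α))
        (by exact_mod_cast hm) (by exact_mod_cast hmq)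

end Irrational

end ContinuedFraction

lemma le_card_filter_nd_lt (α : ℝ) {n k M : ℕ} (hn : 0 < n) (hnk : n * k ≤ M) :
    k ≤ #{m ∈ Icc 1 M | nd ((m : ℕ) * α) < 1 / n} := by
  classical
  have hδ : (0 : ℝ) < 1 / n := by positivity
  let box : ℕ → ℕ := fun m => ⌊Int.fract (m * α) / (1 / n)⌋₊
  have hmaps : ∀ m ∈ range (M + 1), box m ∈ range n := by
    intro m _
    rw [mem_range, Nat.floor_lt (div_nonneg (Int.fract_nonneg _) hδ.le), div_lt_iff₀ hδ,
      mul_one_div_cancel (by positivity : (n : ℝ) ≠ 0)]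
    exact Int.fract_lt_one _
  obtain ⟨b, -, hb⟩ := exists_lt_card_fiber_of_mul_lt_card_of_maps_to (n := k) hmaps
    (by rw [card_range, card_range]; omega)
  set T := {m ∈ range (M + 1) | box m = b}
  have hT : T.Nonempty := card_pos.1 (by omega)
  set m₀ := T.min' hT
  have hm₀ : m₀ ∈ T := T.min'_mem hT
  refine le_trans ?_ (card_le_card_of_injOn (fun m => m - m₀) (s := T.erase m₀) ?_ ?_)
  · rw [card_erase_of_mem hm₀]; omega
  · intro m hm
    show m - m₀ ∈ _
    have hmT := mem_of_mem_erase hm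
    have hlt : m₀ < m := lt_of_le_of_ne (T.min'_le m hmT) (ne_of_mem_erase hm).symm
    have hmM : m ≤ M := Nat.lt_succ_iff.1 (mem_range.1 (mem_filter.1 hmT).1)
    refine mem_filter.2 ⟨mem_Icc.2 ⟨by omega, by omega⟩, ?_⟩
    have hbox : box m = box m₀ := (mem_filter.1 hmT).2.trans (mem_filter.1 hm₀).2.symm
    calc nd ((m - m₀ : ℕ) * α)
        ≤ |(m - m₀ : ℕ) * α - (⌊(m : ℝ) * α⌋ - ⌊(m₀ : ℝ) * α⌋ : ℤ)| := round_le _ _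
      _ = |Int.fract ((m : ℝ) * α) - Int.fract ((m₀ : ℝ) * α)| := by
        rw [Nat.cast_sub hlt.le, Int.fract, Int.fract]; push_cast; ring_nf
      _ < 1 / n := abs_sub_lt_of_natFloor_div_eq hδ (Int.fract_nonneg _) (Int.fract_nonneg _) hbox
  · intro a ha b hb hab
    have := T.min'_le a (mem_of_mem_erase ha)
    have := T.min'_le b (mem_of_mem_erase hb)
    simp only at hab
    omega

lemma le_S_of_irrational {α : ℝ} (hα : Irrational α) (M : ℕ) : 1 / 4 * M * Real.log M ≤ S α M := by
  rcases Nat.eq_zero_or_pos M with rfl | hM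
  · simp [S]
  set K := M / 2
  have hpos : ∀ m ∈ Icc 1 M, 0 < nd (m * α) := fun m hm =>
    abs_pos.2 (sub_ne_zero.2 ((hα.natCast_mul (by have := (mem_Icc.1 hm).1; omega)).ne_int _))
  have hcard : ∀ k ≤ K, k ≤ #{m ∈ Icc 1 M | nd ((m : ℕ) * α) ≤ k * (2 / M)} := by
    intro k hk
    rcases Nat.eq_zero_or_pos k with rfl | hk₀
    · exact Nat.zero_le _
    have hn : 0 < M / k := Nat.div_pos (by omega) hk₀
    have hMkn : M ≤ 2 * k * (M / k) := by nlinarith [Nat.lt_mul_div_succ M hk₀]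
    have hthr : 1 / ((M / k : ℕ) : ℝ) ≤ k * (2 / M) := by
      have : (M : ℝ) ≤ 2 * k * (M / k : ℕ) := by exact_mod_cast hMkn
      rw [div_le_iff₀ (by positivity)]
      field_simp
      linarith
    exact (le_card_filter_nd_lt α hn (Nat.div_mul_le_self M k)).trans
      (card_le_card (monotone_filter_right _ fun _ _ h => h.le.trans hthr))
  have hS := harmonic_div_le_sum_inv (fun m : ℕ => nd (m * α)) (by positivity : (0 : ℝ) < 2 / M)
    K (Icc 1 M) hpos hcard
  have hlog : Real.log M ≤ 2 * harmonic K := by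
    have hMK : M ≤ (K + 1) ^ 2 := by
      have : M < 2 * (K + 1) := Nat.lt_mul_div_succ M two_pos
      nlinarith
    calc Real.log M ≤ Real.log (((K + 1 : ℕ) : ℝ) ^ 2) :=
          Real.log_le_log (by positivity) (by exact_mod_cast hMK)
      _ = 2 * Real.log (K + 1 : ℕ) := by rw [Real.log_pow]; norm_num
      _ ≤ 2 * harmonic K := by gcongr; exact log_add_one_le_harmonic K
  calc 1 / 4 * M * Real.log M ≤ 1 / 4 * M * (2 * harmonic K) := by gcongr
    _ = harmonic K / (2 / M) := by field_simp; ring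
    _ ≤ S α M := hS

section BadlyApproximable

variable {α c : ℝ} (hc₀ : 0 < c) (hc : ∀ m : ℕ, 1 ≤ m → c / m ≤ nd (m * α))
include hc₀ hc

lemma S_le_mul_harmonic (M : ℕ) : S α M ≤ 2 / (c / M) * harmonic ⌊1 / 2 / (c / M)⌋₊ := by
  rcases Nat.eq_zero_or_pos M with rfl | hM
  · simp [S]
  have hsep : ∀ a ∈ Icc 1 M, ∀ b ∈ Icc 1 M, a ≠ b →
      c / M ≤ |((a : ℝ) * α - round ((a : ℝ) * α)) - ((b : ℝ) * α - round ((b : ℝ) * α))| := by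
    intro a ha b hb hab
    wlog hba : b < a generalizing a b
    · rw [abs_sub_comm]; exact this b hb a ha hab.symm (by omega)
    have hM' : a - b ≤ M := by have := (mem_Icc.1 ha).2; omega
    calc c / M ≤ c / (a - b : ℕ) :=
          div_le_div_of_nonneg_left hc₀.le (by exact_mod_cast Nat.sub_pos_of_lt hba)
            (by exact_mod_cast hM')
      _ ≤ nd ((a - b : ℕ) * α) := hc _ (by omega)
      _ ≤ |(a - b : ℕ) * α - (round ((a : ℝ) * α) - round ((b : ℝ) * α) : ℤ)| := round_le _ _
      _ = _ := by rw [Nat.cast_sub hba.le]; push_cast; ring_nf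
  refine sum_inv_abs_le_of_separated _ (fun m : ℕ => (m : ℝ) * α - round ((m : ℝ) * α))
    (by positivity) hsep fun m hm => ⟨?_, abs_sub_round _⟩
  obtain ⟨hm1, hmM⟩ := mem_Icc.1 hm
  exact (div_le_div_of_nonneg_left hc₀.le (by exact_mod_cast hm1) (by exact_mod_cast hmM)).trans
    (hc m hm1)

lemma exists_S_le_mul_log : ∃ C > 0, ∀ M : ℕ, 2 ≤ M → S α M ≤ C * M * Real.log M := by
  have hc_half : c ≤ 1 / 2 := by simpa using (hc 1 le_rfl).trans (abs_sub_round _)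
  have hx : 1 ≤ 1 / (2 * c) := by rw [le_div_iff₀ (by positivity)]; linarith
  set L := 1 + Real.log (1 / (2 * c))
  have hL : 1 ≤ L := by linarith [Real.log_nonneg hx]
  refine ⟨2 / c * (2 * L + 1), by positivity, fun M hM => ?_⟩
  have hMR : (2 : ℝ) ≤ M := by exact_mod_cast hM
  have hlogM : 1 / 2 < Real.log M :=
    (by linarith [Real.log_two_gt_d9] : (1 : ℝ) / 2 < Real.log 2).trans_le
      (Real.log_le_log two_pos hMR)
  have hharm : (harmonic ⌊1 / 2 / (c / M)⌋₊ : ℝ) ≤ L + Real.log M := by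
    have hA : 1 / 2 / (c / M) = M * (1 / (2 * c)) := by field_simp
    rw [hA]
    refine (harmonic_floor_le_one_add_log _ (one_le_mul_of_one_le_of_one_le (by linarith) hx)).trans
      (le_of_eq ?_)
    rw [Real.log_mul (by positivity) (by positivity)]
    ring
  calc S α M ≤ 2 / (c / M) * harmonic ⌊1 / 2 / (c / M)⌋₊ := S_le_mul_harmonic hc₀ hc M
    _ ≤ 2 / (c / M) * (L + Real.log M) := by gcongr
    _ ≤ 2 / (c / M) * ((2 * L + 1) * Real.log M) := by gcongr; nlinarith
    _ = 2 / c * (2 * L + 1) * M * Real.log M := by field_simp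

end BadlyApproximable

theorem bounded_type_growth (α : ℝ) (hα : Irrational α) (hmem : α ∈ Set.Ico (0:ℝ) 1)
    (hbdd : ∃ B : ℕ, ∀ k : ℕ, 1 ≤ k → cfA α k ≤ B) :
    ∃ c C : ℝ, 0 < c ∧ 0 < C ∧ ∀ M : ℕ, 2 ≤ M →
      c * M * Real.log M ≤ S α M ∧ S α M ≤ C * M * Real.log M := by
  obtain ⟨B, hB⟩ := hbdd
  obtain ⟨c, hc₀, hc⟩ := exists_div_le_nd_of_cfA_le hα hmem hB
  obtain ⟨C, hC₀, hC⟩ := exists_S_le_mul_log hc₀ hc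
  exact ⟨1 / 4, C, by norm_num, hC₀, fun M hM => ⟨le_S_of_irrational hα M, hC M hM⟩⟩
end
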